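/- Let φ(z) = max(1 − z, 0) (hinge loss). For the hybrid model with parameters (w, θ₊, θ₋), θ₋ ≤ θ₊, and a single sample (x, y, y_b) with y, y_b ∈ {−1,1}: if the hybrid model misclassifies x (f(x) ≠ y), then the corresponding loss term in the paper's loss — φ(y(⟨w,x⟩ − θ₋)) when y_b = 1 and φ(y(⟨w,x⟩ − θ₊)) when y_b = −1 — is at least 1. That is, the loss function upper-bounds the 0–1 error of the hybrid model. -/

import Mathlib

/-- The hybrid linear model with black-box prediction yb on the given point:
predict 1 if ⟨w,x⟩ ≥ θ₊, predict −1 if ⟨w,x⟩ ≤ θ₋, else predict yb. -/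
noncomputable def hybridLinear {d : ℕ} (w : Fin d → ℝ) (θp θm : ℝ)
    (fb : (Fin d → ℝ) → ℝ) (x : Fin d → ℝ) : ℝ :=
  if θp ≤ ∑ i, w i * x i then 1
  else if ∑ i, w i * x i ≤ θm then -1
  else fb x

/-! The surrogate loss compares ⟨w,x⟩ with θ₋ on points the black box labels 1 and with θ₊
otherwise; a misclassified point always lies on the wrong side of that threshold, so its
margin is nonpositive and its hinge loss is at least 1. -/

lemma one_le_hinge_of_nonpos {z : ℝ} (hz : z ≤ 0) : 1 ≤ max (1 - z) 0 :=
  (by linarith : (1 : ℝ) ≤ 1 - z).trans (le_max_left _ _)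

section HybridLinear

variable {d : ℕ} {w : Fin d → ℝ} {θp θm : ℝ} {fb : (Fin d → ℝ) → ℝ} {x : Fin d → ℝ}

lemma hybridLinear_eq_one_or_eq_neg_one (hfb : fb x = 1 ∨ fb x = -1) :
    hybridLinear w θp θm fb x = 1 ∨ hybridLinear w θp θm fb x = -1 := by
  unfold hybridLinear
  split_ifs <;> simp_all

lemma threshold_le_of_hybridLinear_eq_one (hθ : θm ≤ θp)
    (h : hybridLinear w θp θm fb x = 1) :
    (if fb x = 1 then θm else θp) ≤ ∑ i, w i * x i := by
  unfold hybridLinear at h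
  split_ifs at h ⊢ <;> first | linarith | contradiction

lemma le_threshold_of_hybridLinear_eq_neg_one (h : hybridLinear w θp θm fb x = -1) :
    ∑ i, w i * x i ≤ if fb x = 1 then θm else θp := by
  unfold hybridLinear at h
  split_ifs at h ⊢ <;> linarith

lemma margin_nonpos_of_hybridLinear_ne {y : ℝ} (hθ : θm ≤ θp) (hy : y = 1 ∨ y = -1)
    (hfb : fb x = 1 ∨ fb x = -1) (hmis : hybridLinear w θp θm fb x ≠ y) :
    y * (∑ i, w i * x i - if fb x = 1 then θm else θp) ≤ 0 := by
  rcases hy with rfl | rfl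
  · have h : hybridLinear w θp θm fb x = -1 :=
      (hybridLinear_eq_one_or_eq_neg_one hfb).resolve_left hmis
    linarith [le_threshold_of_hybridLinear_eq_neg_one h]
  · have h : hybridLinear w θp θm fb x = 1 :=
      (hybridLinear_eq_one_or_eq_neg_one hfb).resolve_right hmis
    linarith [threshold_le_of_hybridLinear_eq_one hθ h]

end HybridLinear

/-- the hinge surrogate loss upper-bounds the 0–1 error of the
hybrid model: if the hybrid model misclassifies (x, y), the loss term
(φ(y(⟨w,x⟩ − θ₋)) when y_b = 1, φ(y(⟨w,x⟩ − θ₊)) when y_b = −1) is ≥ 1,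
where φ(z) = max(1 − z, 0). -/
theorem stmt_15 {d : ℕ} (w : Fin d → ℝ) (θp θm : ℝ) (hθ : θm ≤ θp)
    (x : Fin d → ℝ) (y yb : ℝ)
    (hy : y = 1 ∨ y = -1) (hyb : yb = 1 ∨ yb = -1)
    (hmis : hybridLinear w θp θm (fun _ => yb) x ≠ y) :
    1 ≤ if yb = 1 then max (1 - y * ((∑ i, w i * x i) - θm)) 0
        else max (1 - y * ((∑ i, w i * x i) - θp)) 0 := by
  have hmargin := margin_nonpos_of_hybridLinear_ne hθ hy hyb hmis
  split_ifs at hmargin ⊢ <;> exact one_le_hinge_of_nonpos hmargin
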